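/- Let Γ be the Paley graph on Z/17Z, where distinct vertices x and y are adjacent iff x − y is a nonzero quadratic residue modulo 17 (equivalently, x − y ∈ {1, 2, 4, 8, 9, 13, 15, 16}). Then Γ contains no clique on 4 vertices and no independent set of 4 vertices. -/

import Mathlib

/-!
Translations are automorphisms of the Paley graph and multiplication by the non-residue `3`
maps it isomorphically onto its complement, so an independent set of size 4 would give a
clique of size 4. Translating one vertex of such a clique to `0`, the other three would be
residues forming a triangle; a check of the 8 residues shows they span no triangle.
-/

open Finset Function

section CayleyClique

variable {G H : Type*} [AddCommGroup G] [AddCommGroup H]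

def IsCayleyClique (S : Set G) (s : Finset G) : Prop :=
  ∀ x ∈ s, ∀ y ∈ s, x ≠ y → x - y ∈ S

theorem IsCayleyClique.exists_triangle {S : Set G} {s : Finset G} (h : IsCayleyClique S s)
    (hs : 3 < #s) : ∃ b ∈ S, ∃ c ∈ S, ∃ d ∈ S, b - c ∈ S ∧ b - d ∈ S ∧ c - d ∈ S := by
  obtain ⟨a, ha, b, hb, c, hc, d, hd, hab, hac, had, hbc, hbd, hcd⟩ := three_lt_card.mp hs
  refine ⟨b - a, h b hb a ha hab.symm, c - a, h c hc a ha hac.symm, d - a, h d hd a ha had.symm,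
    ?_, ?_, ?_⟩ <;> rw [sub_sub_sub_cancel_right]
  exacts [h b hb c hc hbc, h b hb d hd hbd, h c hc d hd hcd]

theorem IsCayleyClique.image [DecidableEq H] {S : Set H} {T : Set G} {s : Finset G}
    {f : G →+ H} (hTS : ∀ z ∈ T, z ≠ 0 → f z ∈ S)
    (h : IsCayleyClique T s) : IsCayleyClique S (s.image f) := by
  simp only [IsCayleyClique, mem_image]
  rintro _ ⟨x, hx, rfl⟩ _ ⟨y, hy, rfl⟩ hne
  have hxy : x ≠ y := fun hxy => hne (congrArg f hxy)
  rw [← map_sub]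
  exact hTS _ (h x hx y hy hxy) (sub_ne_zero.mpr hxy)

end CayleyClique

def paleyResidues17 : Finset (ZMod 17) := {1, 2, 4, 8, 9, 13, 15, 16}

theorem paleyResidues17_triangle_free :
    ∀ b ∈ paleyResidues17, ∀ c ∈ paleyResidues17, ∀ d ∈ paleyResidues17,
      b - c ∈ paleyResidues17 → b - d ∈ paleyResidues17 → c - d ∉ paleyResidues17 := by
  decide

theorem three_mul_mem_paleyResidues17 :
    ∀ z : ZMod 17, z ∉ paleyResidues17 → z ≠ 0 → 3 * z ∈ paleyResidues17 := by
  decide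

theorem not_isCayleyClique_paleyResidues17 {s : Finset (ZMod 17)} (hs : #s = 4) :
    ¬ IsCayleyClique (paleyResidues17 : Set (ZMod 17)) s := fun h => by
  obtain ⟨b, hb, c, hc, d, hd, hbc, hbd, hcd⟩ := h.exists_triangle (by omega)
  exact paleyResidues17_triangle_free b hb c hc d hd hbc hbd hcd

theorem not_isCayleyClique_compl_paleyResidues17 {s : Finset (ZMod 17)} (hs : #s = 4) :
    ¬ IsCayleyClique (paleyResidues17 : Set (ZMod 17))ᶜ s := fun h => by
  have hinj : Injective (AddMonoidHom.mulLeft (3 : ZMod 17)) := by decide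
  refine not_isCayleyClique_paleyResidues17 ?_
    (h.image (f := AddMonoidHom.mulLeft 3) three_mul_mem_paleyResidues17)
  rw [card_image_of_injective s hinj, hs]

/-- The Paley graph on `ZMod 17` (x adjacent to y iff `x - y` is a nonzero quadratic
residue mod 17) contains no clique on 4 vertices and no independent set of 4 vertices. -/
theorem stmt_5 :
    (¬ ∃ s : Finset (ZMod 17), s.card = 4 ∧ ∀ x ∈ s, ∀ y ∈ s, x ≠ y →
        x - y ∈ ({1, 2, 4, 8, 9, 13, 15, 16} : Finset (ZMod 17))) ∧
    (¬ ∃ s : Finset (ZMod 17), s.card = 4 ∧ ∀ x ∈ s, ∀ y ∈ s, x ≠ y →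
        x - y ∉ ({1, 2, 4, 8, 9, 13, 15, 16} : Finset (ZMod 17))) :=
  ⟨fun ⟨_, hs, h⟩ => not_isCayleyClique_paleyResidues17 hs h,
    fun ⟨_, hs, h⟩ => not_isCayleyClique_compl_paleyResidues17 hs h⟩
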